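/- The Maclaurin-type inequality σ_k(λ)·σ_1(λ) ≥ ((n+1)(k+1)/(n+1−k))·σ_{k+1}(λ) holds for all λ in the closed Newton cone Γ̄_k^+ ⊂ ℝ^{n+1}, and equality for λ in the open cone Γ_k^+ forces λ to be a multiple of (1,1,…,1). -/

import Mathlib

/-!
Write `E_j = σ_j / C(m, j)` for a vector of `m` reals. Newton's inequalities
`E_j E_{j+2} ≤ E_{j+1}²` hold for every real vector: by Rolle's theorem the critical points of
`∏ (X - λ_i)` form a real vector with one coordinate fewer and the same `E_0, …, E_{m-1}`, which
reduces them to the case `j + 2 = m`; inverting the coordinates turns that case into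
`2 m σ_2 ≤ (m - 1) σ_1²`, i.e. `∑_{i,j} (λ_i - λ_j)² ≥ 0`.
On `Γ_k^+` the ratios `E_{j+1} / E_j` are therefore nonincreasing for `j ≤ k`, which gives
`E_{k+1} ≤ E_k E_1`, the inequality in normalized form; equality forces `E_2 = E_1²`, hence all
`λ_i` are equal. The closed cone follows by continuity, since `λ + t (1, …, 1) ∈ Γ_k^+` for `t > 0`.
-/

open Finset

/-- The k-th elementary symmetric polynomial of `x ∈ ℝ^m`. -/
def esym {m : ℕ} (k : ℕ) (x : Fin m → ℝ) : ℝ :=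
  ∑ s ∈ Finset.univ.powersetCard k, ∏ i ∈ s, x i

open Polynomial

theorem esym_eq_esymm {m : ℕ} (k : ℕ) (x : Fin m → ℝ) :
    esym k x = (univ.val.map x).esymm k := by
  rw [Finset.esymm_map_val]; rfl

@[simp] theorem esym_zero {m : ℕ} (x : Fin m → ℝ) : esym 0 x = 1 := by simp [esym]

theorem esym_one {m : ℕ} (x : Fin m → ℝ) : esym 1 x = ∑ i, x i := by
  simp [esym, powersetCard_one]

theorem esym_self {m : ℕ} (x : Fin m → ℝ) : esym m x = ∏ i, x i := by
  have h : univ.powersetCard m = {(univ : Finset (Fin m))} := by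
    simpa using powersetCard_self (univ : Finset (Fin m))
  simp [esym, h]

theorem prod_X_add_C_eq_sum_esym {m : ℕ} (x : Fin m → ℝ) :
    ∏ i, (X + C (x i)) = ∑ j ∈ range (m + 1), C (esym j x) * X ^ (m - j) := by
  have := Multiset.prod_X_add_C_eq_sum_esymm (univ.val.map x)
  rw [Multiset.map_map, Multiset.card_map, card_val, card_univ, Fintype.card_fin] at this
  simp only [esym_eq_esymm]
  exact this

theorem coeff_prod_X_add_C {m j : ℕ} (x : Fin m → ℝ) (hj : j ≤ m) :
    (∏ i, (X + C (x i))).coeff (m - j) = esym j x := by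
  rw [Finset.prod_X_add_C_coeff _ _ (by simp), card_univ, Fintype.card_fin,
    Nat.sub_sub_self hj]; rfl

theorem esym_add_const {m j : ℕ} (x : Fin m → ℝ) (t : ℝ) (hj : j ≤ m) :
    esym j (fun i => x i + t) =
      ∑ i ∈ range (j + 1), ((m - i).choose (j - i) : ℝ) * t ^ (j - i) * esym i x := by
  have hprod : ∏ i, (X + C (x i + t)) =
      ∑ i ∈ range (m + 1), C (esym i x) * (X + C t) ^ (m - i) := by
    have := congrArg (aeval (X + C t)) (prod_X_add_C_eq_sum_esym x)
    simp only [map_prod, map_sum, map_add, map_mul, map_pow, aeval_X, aeval_C,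
      algebraMap_eq] at this
    rw [← this]
    exact prod_congr rfl fun i _ => by rw [C_add]; ring
  have := congrArg (coeff · (m - j)) hprod
  simp only [coeff_prod_X_add_C (fun i => x i + t) hj, finsetSum_coeff, coeff_C_mul,
    coeff_X_add_C_pow] at this
  rw [this, ← sum_subset (range_subset_range.2 (Nat.succ_le_succ hj))]
  · refine sum_congr rfl fun i hi => ?_
    have hij : i ≤ j := Nat.lt_succ_iff.1 (mem_range.1 hi)
    rw [show m - i - (m - j) = j - i by omega,
      Nat.choose_symm_of_eq_add (show m - i = (m - j) + (j - i) by omega)]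
    ring
  · intro i him hij
    rw [mem_range] at him hij
    rw [Nat.choose_eq_zero_of_lt (by omega)]
    simp

theorem esym_add_const_pos {m j : ℕ} (x : Fin m → ℝ) (hx : ∀ i, 1 ≤ i → i ≤ j → 0 ≤ esym i x)
    (hj : j ≤ m) {t : ℝ} (ht : 0 < t) : 0 < esym j (fun i => x i + t) := by
  rw [esym_add_const x t hj, sum_range_succ']
  refine add_pos_of_nonneg_of_pos (sum_nonneg fun i hi => ?_) ?_
  · have := hx (i + 1) (by omega) (by rw [mem_range] at hi; omega)
    positivity
  · have := Nat.choose_pos hj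
    simp only [Nat.sub_zero, esym_zero, mul_one]
    positivity

theorem continuous_esym_add_const {m : ℕ} (j : ℕ) (x : Fin m → ℝ) :
    Continuous fun t => esym j (fun i => x i + t) := by
  unfold esym
  fun_prop

namespace Multiset

variable {R : Type*} [CommSemiring R]

theorem esymm_cons (a : R) (s : Multiset R) (j : ℕ) :
    (a ::ₘ s).esymm (j + 1) = s.esymm (j + 1) + a * s.esymm j := by
  simp only [esymm, powersetCard_cons, map_add, sum_add, map_map, Function.comp_def, prod_cons,
    sum_map_mul_left]

theorem esymm_one (s : Multiset R) : s.esymm 1 = s.sum := by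
  simp [esymm, powersetCard_one]

theorem sq_sum_eq_sum_sq_add_two_mul_esymm_two (s : Multiset R) :
    s.sum ^ 2 = (s.map (· ^ 2)).sum + 2 * s.esymm 2 := by
  induction s using Multiset.induction with
  | empty => simp [esymm, powersetCard_zero_right]
  | cons a s ih =>
    rw [show 2 = 1 + 1 from rfl, esymm_cons, esymm_one, sum_cons, map_cons, sum_cons, add_sq, ih]
    ring

end Multiset

theorem sq_sum_eq_sum_sq_add_two_mul_esym_two {m : ℕ} (x : Fin m → ℝ) :
    (∑ i, x i) ^ 2 = ∑ i, x i ^ 2 + 2 * esym 2 x := by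
  have := (univ.val.map x).sq_sum_eq_sum_sq_add_two_mul_esymm_two
  rw [Multiset.map_map] at this
  rw [esym_eq_esymm]
  exact this

theorem sum_sum_sub_sq {ι : Type*} [Fintype ι] (x : ι → ℝ) :
    ∑ i, ∑ j, (x i - x j) ^ 2 = 2 * Fintype.card ι * ∑ i, x i ^ 2 - 2 * (∑ i, x i) ^ 2 := by
  simp only [sub_sq, sum_add_distrib, sum_sub_distrib, sum_const, card_univ, nsmul_eq_mul,
    ← mul_sum, ← sum_mul, mul_assoc, sq (∑ i, x i)]
  ring

theorem sub_one_mul_esym_one_sq_sub {m : ℕ} (x : Fin m → ℝ) :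
    ((m : ℝ) - 1) * esym 1 x ^ 2 - 2 * m * esym 2 x = (∑ i, ∑ j, (x i - x j) ^ 2) / 2 := by
  rw [sum_sum_sub_sq, Fintype.card_fin, esym_one,
    sq_sum_eq_sum_sq_add_two_mul_esym_two]
  ring

theorem two_mul_esym_two_le {m : ℕ} (x : Fin m → ℝ) :
    2 * m * esym 2 x ≤ ((m : ℝ) - 1) * esym 1 x ^ 2 := by
  have := sub_one_mul_esym_one_sq_sub x
  have : 0 ≤ ∑ i, ∑ j, (x i - x j) ^ 2 := by positivity
  linarith

theorem eq_of_two_mul_esym_two_eq {m : ℕ} (x : Fin m → ℝ)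
    (h : 2 * m * esym 2 x = ((m : ℝ) - 1) * esym 1 x ^ 2) (i j : Fin m) : x i = x j := by
  have hsum : ∑ i, ∑ j, (x i - x j) ^ 2 = 0 := by linarith [sub_one_mul_esym_one_sq_sub x]
  rw [sum_eq_zero_iff_of_nonneg fun _ _ => by positivity] at hsum
  have := (sum_eq_zero_iff_of_nonneg fun _ _ => sq_nonneg _).1 (hsum i (mem_univ i)) j (mem_univ j)
  exact sub_eq_zero.1 (pow_eq_zero_iff two_ne_zero |>.1 this)

noncomputable def esymMean {m : ℕ} (j : ℕ) (x : Fin m → ℝ) : ℝ := esym j x / m.choose j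

@[simp] theorem esymMean_zero {m : ℕ} (x : Fin m → ℝ) : esymMean 0 x = 1 := by
  simp [esymMean]

theorem esymMean_pos {m j : ℕ} {x : Fin m → ℝ} (hj : j ≤ m) (hx : 0 < esym j x) :
    0 < esymMean j x :=
  div_pos hx (by exact_mod_cast Nat.choose_pos hj)

theorem esym_sub_eq_prod_mul_esym_inv {d i : ℕ} (y : Fin d → ℝ) (hy : ∀ j, y j ≠ 0)
    (hi : i ≤ d) : esym (d - i) y = (∏ j, y j) * esym i (fun j => (y j)⁻¹) := by
  rw [esym, esym, mul_sum]
  refine sum_nbij' compl compl (fun s hs => ?_) (fun s hs => ?_) (fun s _ => compl_compl s)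
    (fun s _ => compl_compl s) (fun s _ => ?_)
  · simp only [mem_powersetCard_univ, card_compl, Fintype.card_fin] at hs ⊢
    omega
  · simp only [mem_powersetCard_univ, card_compl, Fintype.card_fin] at hs ⊢
    omega
  · rw [← prod_mul_prod_compl s y, prod_inv_distrib, mul_assoc,
      mul_inv_cancel₀ (prod_ne_zero_iff.2 fun j _ => hy j), mul_one]

theorem esymMean_mul_esymMean_le_sq_of_fin_add_two {j : ℕ} (y : Fin (j + 2) → ℝ) :
    esymMean j y * esymMean (j + 2) y ≤ esymMean (j + 1) y ^ 2 := by
  by_cases hzero : ∃ i, y i = 0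
  · obtain ⟨i, hi⟩ := hzero
    have : esym (j + 2) y = 0 := by rw [esym_self]; exact prod_eq_zero (mem_univ i) hi
    simp [esymMean, this, sq_nonneg]
  push Not at hzero
  set z : Fin (j + 2) → ℝ := fun i => (y i)⁻¹
  have h2 := esym_sub_eq_prod_mul_esym_inv y hzero (i := 2) (by omega)
  have h1 := esym_sub_eq_prod_mul_esym_inv y hzero (i := 1) (by omega)
  rw [Nat.add_sub_cancel] at h2
  rw [show j + 2 - 1 = j + 1 by omega] at h1
  have hbase := two_mul_esym_two_le z
  have hc0 : ((j + 2).choose j : ℝ) = (j + 2) * (j + 1) / 2 := by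
    rw [Nat.choose_symm_add, Nat.cast_choose_two]; push_cast; ring
  have hc1 : ((j + 2).choose (j + 1) : ℝ) = j + 2 := by
    rw [Nat.choose_succ_self_right]; push_cast; ring
  simp only [esymMean, h2, h1, esym_self, Nat.choose_self, hc0, hc1] at hbase ⊢
  push_cast at hbase ⊢
  set P := ∏ i, y i
  have key : 2 * esym 2 z / ((j + 2) * (j + 1)) ≤ esym 1 z ^ 2 / (j + 2) ^ 2 := by
    rw [div_le_div_iff₀ (by positivity) (by positivity)]
    nlinarith
  calc P * esym 2 z / ((j + 2) * (j + 1) / 2) * (P / 1)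
      = P ^ 2 * (2 * esym 2 z / ((j + 2) * (j + 1))) := by field_simp
    _ ≤ P ^ 2 * (esym 1 z ^ 2 / (j + 2) ^ 2) := mul_le_mul_of_nonneg_left key (sq_nonneg P)
    _ = (P * esym 1 z / (j + 2)) ^ 2 := by field_simp

theorem Multiset.exists_map_univ_eq {α : Type*} {m : ℕ} (s : Multiset α) (hs : card s = m) :
    ∃ x : Fin m → α, univ.val.map x = s := by
  obtain ⟨l, rfl⟩ : ∃ l : List α, (l : Multiset α) = s := Quot.exists_rep s
  rw [coe_card] at hs
  subst hs
  exact ⟨l.get, by rw [Fin.univ_val_map, List.ofFn_get]⟩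

theorem Multiset.esymm_roots_derivative_prod_X_sub_C {m : ℕ} (s : Multiset ℝ)
    (hs : card s = m + 1) :
    card (derivative (s.map fun a => X - C a).prod).roots = m ∧
      ∀ i ≤ m, ((m : ℝ) + 1) * (derivative (s.map fun a => X - C a).prod).roots.esymm i =
        ((m : ℝ) + 1 - i) * s.esymm i := by
  set Q := (s.map fun a => X - C a).prod
  have hQ : Q.natDegree = m + 1 := by rw [natDegree_multiset_prod_X_sub_C_eq_card, hs]
  have hdeg : (derivative Q).natDegree = m ∧ card (derivative Q).roots = m := by
    -- Rolle's theorem: `Q'` has a root between any two consecutive roots of `Q`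
    have h1 := card_roots_le_derivative Q
    have h2 := natDegree_derivative_le Q
    have h3 := card_roots' (derivative Q)
    rw [roots_multiset_prod_X_sub_C, hs] at h1
    omega
  have hlead : (derivative Q).leadingCoeff = m + 1 := by
    have hmonic : Q.Monic := monic_multiset_prod_of_monic _ _ fun a _ => monic_X_sub_C a
    rw [leadingCoeff, hdeg.1, coeff_derivative, ← hQ, hmonic.coeff_natDegree, one_mul]
  refine ⟨hdeg.2, fun i hi => ?_⟩
  have hA := coeff_eq_esymm_roots_of_card (hdeg.2.trans hdeg.1.symm) (k := m - i) (by omega)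
  have hB := prod_X_sub_C_coeff s (k := m + 1 - i) (by omega)
  have hC := coeff_derivative Q (m - i)
  rw [hdeg.1, hlead, Nat.sub_sub_self hi] at hA
  rw [hs, show m + 1 - (m + 1 - i) = i by omega] at hB
  rw [show m - i + 1 = m + 1 - i by omega, hA, hB] at hC
  push_cast [Nat.cast_sub hi] at hC
  apply mul_left_cancel₀ (pow_ne_zero i (by norm_num : (-1 : ℝ) ≠ 0))
  linear_combination hC

theorem exists_esymMean_eq {m : ℕ} (y : Fin (m + 1) → ℝ) :
    ∃ z : Fin m → ℝ, ∀ i ≤ m, esymMean i z = esymMean i y := by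
  obtain ⟨hcard, hesymm⟩ := (univ.val.map y).esymm_roots_derivative_prod_X_sub_C (m := m) (by simp)
  obtain ⟨z, hz⟩ := Multiset.exists_map_univ_eq _ hcard
  refine ⟨z, fun i hi => ?_⟩
  have h := hesymm i hi
  rw [← hz, ← esym_eq_esymm, ← esym_eq_esymm] at h
  have hchoose : (m.choose i : ℝ) * (m + 1) = (m + 1).choose i * ((m : ℝ) + 1 - i) := by
    have hnat := congrArg (Nat.cast (R := ℝ)) (Nat.choose_mul_succ_eq m i)
    push_cast [Nat.cast_sub (by omega : i ≤ m + 1)] at hnat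
    exact hnat
  have hi' : (0 : ℝ) < m + 1 - i := by
    have : (i : ℝ) ≤ m := by exact_mod_cast hi
    linarith
  have := Nat.choose_pos hi
  have := Nat.choose_pos (Nat.le_succ_of_le hi)
  rw [esymMean, esymMean, div_eq_div_iff (by positivity) (by positivity)]
  apply mul_left_cancel₀ (show ((m : ℝ) + 1) * (m + 1 - i) ≠ 0 by positivity)
  linear_combination ((m + 1).choose i * ((m : ℝ) + 1 - i)) * h - (esym i y * (m + 1 - i)) * hchoose

theorem esymMean_mul_esymMean_le_sq {d j : ℕ} (hjd : j + 2 ≤ d) (y : Fin d → ℝ) :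
    esymMean j y * esymMean (j + 2) y ≤ esymMean (j + 1) y ^ 2 := by
  induction d, hjd using Nat.le_induction with
  | base => exact esymMean_mul_esymMean_le_sq_of_fin_add_two y
  | succ d hd ih =>
    obtain ⟨z, hz⟩ := exists_esymMean_eq y
    rw [← hz j (by omega), ← hz (j + 1) (by omega), ← hz (j + 2) hd]
    exact ih z

theorem mul_le_mul_of_log_concave {P : ℕ → ℝ} {k : ℕ} (hpos : ∀ j ≤ k, 0 < P j)
    (hP : ∀ j < k, P j * P (j + 2) ≤ P (j + 1) ^ 2) : P 0 * P (k + 1) ≤ P k * P 1 := by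
  induction k with
  | zero => exact le_rfl
  | succ k ih =>
    have ih := ih (fun j hj => hpos j (by omega)) (fun j hj => hP j (by omega))
    have h0 := hpos 0 (by omega)
    have hk := hpos k (by omega)
    have hk1 := hpos (k + 1) le_rfl
    refine le_of_mul_le_mul_left ?_ hk
    calc P k * (P 0 * P (k + 2)) = P 0 * (P k * P (k + 2)) := by ring
      _ ≤ P 0 * P (k + 1) ^ 2 := mul_le_mul_of_nonneg_left (hP k (by omega)) h0.le
      _ = P (k + 1) * (P 0 * P (k + 1)) := by ring
      _ ≤ P (k + 1) * (P k * P 1) := mul_le_mul_of_nonneg_left ih hk1.le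
      _ = P k * (P (k + 1) * P 1) := by ring

section OpenCone

variable {m k : ℕ} {x : Fin m → ℝ}

theorem esymMean_succ_le_mul (hkm : k < m) (hx : ∀ j, 1 ≤ j → j ≤ k → 0 < esym j x) :
    esymMean (k + 1) x ≤ esymMean k x * esymMean 1 x := by
  have h := mul_le_mul_of_log_concave (P := fun j => esymMean j x) (k := k)
    (fun j hj => j.eq_zero_or_pos.elim (fun h => by simp [h])
      (fun h => esymMean_pos (by omega) (hx j h hj)))
    (fun j hj => esymMean_mul_esymMean_le_sq (by omega) x)
  simpa using h

theorem esymMean_two_eq_sq_of_esymMean_succ_eq_mul (hk : 1 ≤ k) (hkm : k < m)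
    (hx : ∀ j, 1 ≤ j → j ≤ k → 0 < esym j x)
    (heq : esymMean (k + 1) x = esymMean k x * esymMean 1 x) :
    esymMean 2 x = esymMean 1 x ^ 2 := by
  obtain ⟨k, rfl⟩ : ∃ k', k = k' + 1 := ⟨k - 1, by omega⟩
  have hchain := mul_le_mul_of_log_concave (P := fun j => esymMean (j + 1) x) (k := k)
    (fun j hj => esymMean_pos (by omega) (hx (j + 1) (by omega) (by omega)))
    (fun j hj => esymMean_mul_esymMean_le_sq (by omega) x)
  have hnewton := esymMean_mul_esymMean_le_sq (j := 0) (by omega) x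
  have hk1 := esymMean_pos (by omega) (hx (k + 1) (by omega) le_rfl)
  simp only [zero_add, esymMean_zero, one_mul, heq] at hchain hnewton
  have : esymMean 1 x ^ 2 ≤ esymMean 2 x := by nlinarith
  linarith

theorem two_mul_esym_two_eq_of_esymMean_two_eq_sq (hm : 2 ≤ m)
    (h : esymMean 2 x = esymMean 1 x ^ 2) :
    2 * m * esym 2 x = ((m : ℝ) - 1) * esym 1 x ^ 2 := by
  have : (m : ℝ) - 1 ≠ 0 := by
    have : (2 : ℝ) ≤ m := by exact_mod_cast hm
    linarith
  rw [esymMean, esymMean, Nat.cast_choose_two, Nat.choose_one_right] at h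
  field_simp at h
  linarith

end OpenCone

theorem esym_mul_esym_one_sub_eq {m k : ℕ} (hkm : k < m) (x : Fin m → ℝ) :
    esym k x * esym 1 x - m * (k + 1) / (m - k) * esym (k + 1) x =
      m * m.choose k * (esymMean k x * esymMean 1 x - esymMean (k + 1) x) := by
  have hchoose : (m.choose (k + 1) : ℝ) * (k + 1) = m.choose k * (m - k) := by
    have hnat := congrArg (Nat.cast (R := ℝ)) (Nat.choose_succ_right_eq m k)
    push_cast [Nat.cast_sub hkm.le] at hnat
    exact hnat
  have := Nat.choose_pos hkm.le
  have := Nat.choose_pos hkm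
  have : (0 : ℝ) < m - k := by
    have : (k : ℝ) < m := by exact_mod_cast hkm
    linarith
  have : (0 : ℝ) < m := by exact_mod_cast (show 0 < m by omega)
  rw [esymMean, esymMean, esymMean, Nat.choose_one_right]
  field_simp
  linear_combination -(m : ℝ) * esym (k + 1) x * hchoose

section Maclaurin

variable {m k : ℕ} {x : Fin m → ℝ}

theorem maclaurin_of_pos (hkm : k < m) (hx : ∀ j, 1 ≤ j → j ≤ k → 0 < esym j x) :
    m * (k + 1) / (m - k) * esym (k + 1) x ≤ esym k x * esym 1 x := by
  have h := esym_mul_esym_one_sub_eq hkm x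
  have := esymMean_succ_le_mul hkm hx
  have : (0 : ℝ) < m.choose k := by exact_mod_cast Nat.choose_pos hkm.le
  have : 0 ≤ esym k x * esym 1 x - m * (k + 1) / (m - k) * esym (k + 1) x := by
    rw [h]; apply mul_nonneg (by positivity); linarith
  linarith

theorem maclaurin_of_nonneg (hkm : k < m) (hx : ∀ j, 1 ≤ j → j ≤ k → 0 ≤ esym j x) :
    m * (k + 1) / (m - k) * esym (k + 1) x ≤ esym k x * esym 1 x := by
  set F : ℝ → ℝ := fun t => esym k (fun i => x i + t) * esym 1 (fun i => x i + t) -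
    m * (k + 1) / (m - k) * esym (k + 1) (fun i => x i + t)
  have hF : Continuous F := ((continuous_esym_add_const k x).mul
    (continuous_esym_add_const 1 x)).sub (continuous_const.mul (continuous_esym_add_const _ x))
  have hpos : Set.Ioi 0 ⊆ {t | 0 ≤ F t} := fun t ht =>
    sub_nonneg.2 (maclaurin_of_pos hkm fun j hj hjk =>
      esym_add_const_pos x (fun i hi hij => hx i hi (hij.trans hjk)) (by omega) ht)
  have h0 := (isClosed_le continuous_const hF).closure_subset_iff.2 hpos
    (by rw [closure_Ioi]; exact Set.self_mem_Ici)
  simpa [F] using h0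

theorem eq_of_maclaurin_eq (hk : 1 ≤ k) (hkm : k < m) (hx : ∀ j, 1 ≤ j → j ≤ k → 0 < esym j x)
    (heq : esym k x * esym 1 x = m * (k + 1) / (m - k) * esym (k + 1) x) (i j : Fin m) :
    x i = x j := by
  have h := esym_mul_esym_one_sub_eq hkm x
  have : (0 : ℝ) < m.choose k := by exact_mod_cast Nat.choose_pos hkm.le
  have : (0 : ℝ) < m := by exact_mod_cast (show 0 < m by omega)
  rw [heq, sub_self, eq_comm, mul_eq_zero_iff_left (by positivity), sub_eq_zero] at h
  exact eq_of_two_mul_esym_two_eq x (two_mul_esym_two_eq_of_esymMean_two_eq_sq (by omega)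
    (esymMean_two_eq_sq_of_esymMean_succ_eq_mul hk hkm hx h.symm)) i j

end Maclaurin

/-- Maclaurin-type inequality σ_k·σ_1 ≥ ((n+1)(k+1)/(n+1−k))·σ_{k+1} on the
closed cone Γ̄_k^+, with equality in the open cone Γ_k^+ only for multiples of
(1,…,1). -/
theorem maclaurin_type (n k : ℕ) (hk : 1 ≤ k) (hkn : k ≤ n) :
    (∀ lam : Fin (n+1) → ℝ, (∀ j, 1 ≤ j → j ≤ k → 0 ≤ esym j lam) →
      esym k lam * esym 1 lam
        ≥ (((n : ℝ) + 1) * ((k : ℝ) + 1) / ((n : ℝ) + 1 - k)) * esym (k+1) lam)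
    ∧
    (∀ lam : Fin (n+1) → ℝ, (∀ j, 1 ≤ j → j ≤ k → 0 < esym j lam) →
      esym k lam * esym 1 lam
        = (((n : ℝ) + 1) * ((k : ℝ) + 1) / ((n : ℝ) + 1 - k)) * esym (k+1) lam →
      ∃ c : ℝ, ∀ i : Fin (n+1), lam i = c) := by
  refine ⟨fun lam hlam => ?_, fun lam hlam heq => ?_⟩
  · have := maclaurin_of_nonneg (m := n + 1) (Nat.lt_succ_of_le hkn) hlam
    push_cast at this
    exact this
  · refine ⟨lam 0, fun i => eq_of_maclaurin_eq hk (Nat.lt_succ_of_le hkn) hlam ?_ i 0⟩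
    push_cast
    exact heq
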